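/- arXiv:2509.21539 — 4 statements merged into one kernel-verified Lean document; each statement's English description precedes it below -/
import Mathlib

section
/- Let A and B be bounded positive semi-definite self-adjoint operators on a Hilbert space. Then the spectrum of √B A √B is contained in conv(σ(A)) · σ(B), where conv(σ(A)) is the closed convex hull of the spectrum of A and the product of sets X·Y is {xy : x ∈ X, y ∈ Y}. -/
open ContinuousLinearMap RCLike

section aux

variable {H : Type*} [NormedAddCommGroup H] [InnerProductSpace ℂ H] [CompleteSpace H]

local notation "⟪" x ", " y "⟫" => @inner ℂ _ _ x y


private lemma inner_re_le_of_le' {X Y : H →L[ℂ] H} (h : X ≤ Y) (x : H) :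
    re ⟪X x, x⟫ ≤ re ⟪Y x, x⟫ := by
  have h' := ((le_def X Y).mp h).inner_nonneg_left x
  rw [ContinuousLinearMap.sub_apply, inner_sub_left] at h'
  have h'' := (RCLike.nonneg_iff.mp h').1
  rw [map_sub] at h''
  linarith

private lemma re_inner_algebraMap' (r : ℝ) (x : H) :
    re ⟪(algebraMap ℝ (H →L[ℂ] H) r) x, x⟫ = r * ‖x‖ ^ 2 := by
  rw [Algebra.algebraMap_eq_smul_one, ContinuousLinearMap.smul_apply,
    ContinuousLinearMap.one_apply, ← algebraMap_smul ℂ r x, algebraMap_eq_ofReal, inner_smul_real_left, smul_re, inner_self_eq_norm_sq]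


private lemma re_inner_smul_apply {H : Type*} [NormedAddCommGroup H] [InnerProductSpace ℂ H]
    (r : ℝ) (X : H →L[ℂ] H) (x : H) :
    RCLike.re (@inner ℂ _ _ ((r • X) x) x) = r * RCLike.re (@inner ℂ _ _ (X x) x) := by
  rw [ContinuousLinearMap.smul_apply, ← algebraMap_smul ℂ r (X x), RCLike.algebraMap_eq_ofReal,
    inner_smul_real_left, smul_re]

private lemma isUnit_of_projection_bounds (T P : H →L[ℂ] H) (hT : IsSelfAdjoint T)
    (hP : IsSelfAdjoint P) (hP2 : P * P = P) {ε : ℝ} (hε : 0 < ε)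
    (hplus : ∀ x : H, ε * ‖P x‖ ^ 2 ≤ re ⟪T (P x), P x⟫)
    (hminus : ∀ x : H, re ⟪T ((1 - P) x), (1 - P) x⟫ ≤ -(ε * ‖(1 - P) x‖ ^ 2)) :
    IsUnit T := by
  have hTsymm : ∀ a b : H, ⟪T a, b⟫ = ⟪a, T b⟫ := fun a b => by
    simpa using hT.isSymmetric a b
  -- orthogonality of P x and (1 - P) x
  have horth : ∀ x : H, ⟪P x, (1 - P) x⟫ = 0 := by
    intro x
    have : (1 - P) (P x) = 0 := by
      have := congrArg (fun (U : H →L[ℂ] H) => U x) hP2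
      simp only [ContinuousLinearMap.mul_apply] at this
      simp [ContinuousLinearMap.sub_apply, this]
    have h1P : IsSelfAdjoint (1 - P) := (IsSelfAdjoint.one _).sub hP
    calc ⟪P x, (1 - P) x⟫ = ⟪(1 - P) (P x), x⟫ := (h1P.isSymmetric (P x) x).symm
      _ = 0 := by rw [this, inner_zero_left]
  have hpyth : ∀ x : H, ‖P x‖ ^ 2 + ‖(1 - P) x‖ ^ 2 = ‖x‖ ^ 2 := by
    intro x
    have hx : P x + (1 - P) x = x := by
      simp [ContinuousLinearMap.sub_apply]
    have hns := norm_add_sq (𝕜 := ℂ) (P x) ((1 - P) x)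
    rw [hx, horth x, map_zero] at hns
    linarith
  have hnormsub : ∀ x : H, ‖P x - (1 - P) x‖ = ‖x‖ := by
    intro x
    have hns := norm_sub_sq (𝕜 := ℂ) (P x) ((1 - P) x)
    rw [horth x, map_zero] at hns
    have h2 := hpyth x
    nlinarith [norm_nonneg (P x - (1 - P) x), norm_nonneg x]
  have hbound : ∀ x : H, ε * ‖x‖ ≤ ‖T x‖ := by
    intro x
    have key : ε * ‖x‖ ^ 2 ≤ re ⟪T x, P x - (1 - P) x⟫ := by
      have hx : P x + (1 - P) x = x := by
        simp [ContinuousLinearMap.sub_apply]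
      have hTx : T x = T (P x) + T ((1 - P) x) := by rw [← map_add, hx]
      have hcross : re ⟪T (P x), (1 - P) x⟫ = re ⟪T ((1 - P) x), P x⟫ := by
        rw [hTsymm (P x) ((1 - P) x), inner_re_symm]
      have expand : re ⟪T x, P x - (1 - P) x⟫
          = re ⟪T (P x), P x⟫ - re ⟪T ((1 - P) x), (1 - P) x⟫ := by
        rw [hTx, inner_sub_right, inner_add_left, inner_add_left, map_sub, map_add, map_add]
        linarith [hcross]
      have h1 := hplus x
      have h2 := hminus x
      have h3 := hpyth x
      rw [expand]
      nlinarith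
    have hle : re ⟪T x, P x - (1 - P) x⟫ ≤ ‖T x‖ * ‖x‖ := by
      calc re ⟪T x, P x - (1 - P) x⟫ ≤ ‖⟪T x, P x - (1 - P) x⟫‖ := RCLike.re_le_norm _
        _ ≤ ‖T x‖ * ‖P x - (1 - P) x‖ := norm_inner_le_norm _ _
        _ = ‖T x‖ * ‖x‖ := by rw [hnormsub x]
    rcases eq_or_ne x 0 with rfl | hx0
    · simp
    · have hxpos : 0 < ‖x‖ := norm_pos_iff.mpr hx0
      have : ε * ‖x‖ * ‖x‖ ≤ ‖T x‖ * ‖x‖ := by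
        calc ε * ‖x‖ * ‖x‖ = ε * ‖x‖ ^ 2 := by ring
          _ ≤ re ⟪T x, P x - (1 - P) x⟫ := key
          _ ≤ ‖T x‖ * ‖x‖ := hle
      exact le_of_mul_le_mul_right this hxpos
  rw [isUnit_iff_bijective, bijective_iff_dense_range_and_antilipschitz]
  have hanti : AntilipschitzWith (⟨ε, hε.le⟩ : NNReal)⁻¹ T := by
    refine T.antilipschitz_of_bound fun x => ?_
    change ‖x‖ ≤ ε⁻¹ * ‖T x‖
    rw [inv_mul_eq_div, le_div_iff₀ hε]
    calc ‖x‖ * ε = ε * ‖x‖ := by ring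
      _ ≤ ‖T x‖ := hbound x
  refine ⟨?_, ⟨_, hanti⟩⟩
  have _inst := hanti.completeSpace_range_clm
  rw [Submodule.topologicalClosure_eq_top_iff, Submodule.eq_bot_iff]
  intro y hy
  have hTy : T y = 0 := by
    have h0 := hy (T (T y)) ⟨T y, rfl⟩
    rw [hTsymm (T y) y] at h0
    exact inner_self_eq_zero.mp h0
  have := hbound y
  rw [hTy, norm_zero] at this
  have : ‖y‖ ≤ 0 := by nlinarith
  simpa using le_antisymm this (norm_nonneg y)

end aux
set_option maxHeartbeats 1000000

/-- If `A` and `B` are bounded positive semi-definite self-adjoint operators on a complex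
Hilbert space and `S` is the (unique) positive square root of `B`, then the spectrum of
`S * A * S = √B A √B` is contained in the product set `conv(σ(A)) · σ(B)`. -/
theorem stmt0 {H : Type*} [NormedAddCommGroup H] [InnerProductSpace ℂ H] [CompleteSpace H]
    (A B S : H →L[ℂ] H)
    (hA : A.IsPositive) (hB : B.IsPositive)
    (hS : S.IsPositive) (hS2 : S * S = B) :
    spectrum ℝ (S * A * S) ⊆
      {x : ℝ | ∃ a ∈ closure (convexHull ℝ (spectrum ℝ A)), ∃ b ∈ spectrum ℝ B, x = a * b} := by
  intro lam hlam
  by_contra hmem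
  simp only [Set.mem_setOf_eq, not_exists, not_and] at hmem
  push_neg at hmem
  rcases subsingleton_or_nontrivial (H →L[ℂ] H) with hsub | hnt
  · exact absurd (isUnit_of_subsingleton _) (spectrum.mem_iff.mp hlam)
  have hAsa : IsSelfAdjoint A := hA.isSelfAdjoint
  have hBsa : IsSelfAdjoint B := hB.isSelfAdjoint
  have hSsa : IsSelfAdjoint S := hS.isSelfAdjoint
  have hAnn : (0 : H →L[ℂ] H) ≤ A := (nonneg_iff_isPositive A).mpr hA
  have hBnn : (0 : H →L[ℂ] H) ≤ B := (nonneg_iff_isPositive B).mpr hB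
  have hcptA : IsCompact (spectrum ℝ A) := spectrum.isCompact A
  have hneA : (spectrum ℝ A).Nonempty := hAsa.spectrum_nonempty
  have hcptB : IsCompact (spectrum ℝ B) := spectrum.isCompact B
  have hneB : (spectrum ℝ B).Nonempty := hBsa.spectrum_nonempty
  set m := sInf (spectrum ℝ A) with hm
  set M := sSup (spectrum ℝ A) with hM
  have hmmem : m ∈ spectrum ℝ A := hcptA.sInf_mem hneA
  have hMmem : M ∈ spectrum ℝ A := hcptA.sSup_mem hneA
  have hm0 : 0 ≤ m := spectrum_nonneg_of_nonneg hAnn hmmem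
  have hmM : m ≤ M := csInf_le hcptA.bddBelow hMmem
  have hM0 : 0 ≤ M := hm0.trans hmM
  have hIcc : Set.Icc m M ⊆ closure (convexHull ℝ (spectrum ℝ A)) := by
    rw [← segment_eq_Icc hmM]
    exact (segment_subset_convexHull hmmem hMmem).trans subset_closure
  have hmA : algebraMap ℝ (H →L[ℂ] H) m ≤ A :=
    algebraMap_le_of_le_spectrum (fun x hx => csInf_le hcptA.bddBelow hx) hAsa
  have hAM : A ≤ algebraMap ℝ (H →L[ℂ] H) M :=
    le_algebraMap_of_spectrum_le (fun x hx => le_csSup hcptA.bddAbove hx) hAsa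
  -- dichotomy on the spectrum of B
  have hdi : ∀ b ∈ spectrum ℝ B, M * b < lam ∨ lam < m * b := by
    intro b hb
    by_contra hcon
    push_neg at hcon
    obtain ⟨h1, h2⟩ := hcon
    have hbnn : 0 ≤ b := spectrum_nonneg_of_nonneg hBnn hb
    rcases eq_or_lt_of_le hbnn with hb0 | hbpos
    · refine hmem m (hIcc ⟨le_refl m, hmM⟩) b hb ?_
      rw [← hb0] at h1 h2 ⊢
      rw [mul_zero] at h1 h2 ⊢
      linarith
    · refine hmem (lam / b) ?_ b hb ?_
      · refine hIcc ⟨?_, ?_⟩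
        · rw [le_div_iff₀ hbpos]; linarith
        · rw [div_le_iff₀ hbpos]; linarith
      · field_simp
  -- self-adjointness facts
  have hTsa : IsSelfAdjoint (S * A * S) := by
    have := hAsa.conjugate S
    rwa [hSsa.star_eq] at this
  have hlamsa : IsSelfAdjoint (algebraMap ℝ (H →L[ℂ] H) lam) :=
    IsSelfAdjoint.algebraMap _ (IsSelfAdjoint.all lam)
  set T : H →L[ℂ] H := S * A * S - algebraMap ℝ (H →L[ℂ] H) lam with hTdef
  have hTsa' : IsSelfAdjoint T := hTsa.sub hlamsa
  -- inner-product computations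
  have hSsymm : ∀ a b : H, @inner ℂ _ _ (S a) b = @inner ℂ _ _ a (S b) := fun a b => by
    simpa using hSsa.isSymmetric a b
  have hSB : ∀ z : H, RCLike.re (@inner ℂ _ _ (B z) z) = ‖S z‖ ^ 2 := by
    intro z
    rw [← hS2]
    have hz : (S * S) z = S (S z) := rfl
    rw [hz, hSsymm (S z) z, inner_self_eq_norm_sq]
  have hTre : ∀ w : H,
      RCLike.re (@inner ℂ _ _ (T w) w)
        = RCLike.re (@inner ℂ _ _ (A (S w)) (S w)) - lam * ‖w‖ ^ 2 := by
    intro w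
    rw [hTdef, ContinuousLinearMap.sub_apply, inner_sub_left, map_sub, re_inner_algebraMap']
    congr 1
    have hw : (S * A * S) w = S (A (S w)) := rfl
    rw [hw, hSsymm (A (S w)) w]
  have hAlow : ∀ z : H, m * ‖z‖ ^ 2 ≤ RCLike.re (@inner ℂ _ _ (A z) z) := by
    intro z
    have := inner_re_le_of_le' hmA z
    rwa [re_inner_algebraMap'] at this
  have hAup : ∀ z : H, RCLike.re (@inner ℂ _ _ (A z) z) ≤ M * ‖z‖ ^ 2 := by
    intro z
    have := inner_re_le_of_le' hAM z
    rwa [re_inner_algebraMap'] at this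
  -- it suffices to prove that `T` is a unit
  suffices hunit : IsUnit T by
    rw [spectrum.mem_iff] at hlam
    refine hlam ?_
    have := hunit.neg
    rwa [hTdef, neg_sub] at this
  -- helper to convert operator inequalities into quadratic form bounds
  have hBform : ∀ z : H, 0 ≤ RCLike.re (@inner ℂ _ _ (B z) z) := fun z => by
    rw [hSB z]; positivity
  by_cases hc1 : ∀ b ∈ spectrum ℝ B, M * b < lam
  · -- Case 1: the whole spectrum of `B` is in the low part; take `P = 0`.
    set β := sSup (spectrum ℝ B) with hβ
    have hβmem : β ∈ spectrum ℝ B := hcptB.sSup_mem hneB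
    have hMβ : M * β < lam := hc1 β hβmem
    have hBup : B ≤ algebraMap ℝ (H →L[ℂ] H) β :=
      le_algebraMap_of_spectrum_le (fun x hx => le_csSup hcptB.bddAbove hx) hBsa
    have hBup' : ∀ z : H, RCLike.re (@inner ℂ _ _ (B z) z) ≤ β * ‖z‖ ^ 2 := fun z => by
      have := inner_re_le_of_le' hBup z; rwa [re_inner_algebraMap'] at this
    refine isUnit_of_projection_bounds T 0 hTsa' (IsSelfAdjoint.zero _) (by simp)
      (ε := lam - M * β) (by linarith) (fun x => by simp) ?_
    intro x
    simp only [sub_zero, ContinuousLinearMap.one_apply]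
    rw [hTre x]
    have e1 := hAup (S x)
    have e2 := hSB x
    have e3 := mul_le_mul_of_nonneg_left (hBup' x) hM0
    nlinarith [sq_nonneg ‖x‖]
  · by_cases hc2 : ∀ b ∈ spectrum ℝ B, lam < m * b
    · -- Case 2: the whole spectrum of `B` is in the high part; take `P = 1`.
      set β := sInf (spectrum ℝ B) with hβ
      have hβmem : β ∈ spectrum ℝ B := hcptB.sInf_mem hneB
      have hmβ : lam < m * β := hc2 β hβmem
      have hBlow : algebraMap ℝ (H →L[ℂ] H) β ≤ B :=
        algebraMap_le_of_le_spectrum (fun x hx => csInf_le hcptB.bddBelow hx) hBsa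
      have hBlow' : ∀ z : H, β * ‖z‖ ^ 2 ≤ RCLike.re (@inner ℂ _ _ (B z) z) := fun z => by
        have := inner_re_le_of_le' hBlow z; rwa [re_inner_algebraMap'] at this
      refine isUnit_of_projection_bounds T 1 hTsa' (IsSelfAdjoint.one _) (one_mul 1)
        (ε := m * β - lam) (by linarith) ?_ (fun x => by simp [sub_self])
      intro x
      simp only [ContinuousLinearMap.one_apply]
      rw [hTre x]
      have e1 := hAlow (S x)
      have e2 := hSB x
      have e3 := mul_le_mul_of_nonneg_left (hBlow' x) hm0
      nlinarith [sq_nonneg ‖x‖]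
    · -- Case 3: both parts are nonempty; use a spectral projection of `B`.
      push_neg at hc1
      push_neg at hc2
      obtain ⟨bp, hbpmem, hbp⟩ := hc1
      obtain ⟨bm, hbmmem, hbm⟩ := hc2
      have hbpnn : 0 ≤ bp := spectrum_nonneg_of_nonneg hBnn hbpmem
      have hbmnn : 0 ≤ bm := spectrum_nonneg_of_nonneg hBnn hbmmem
      have hbp' : lam < m * bp := (hdi bp hbpmem).resolve_left (not_lt.mpr hbp)
      have hbm' : M * bm < lam := (hdi bm hbmmem).resolve_right (not_lt.mpr hbm)
      have hlampos : 0 < lam := lt_of_le_of_lt (mul_nonneg hM0 hbmnn) hbm'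
      have hmpos : 0 < m := by nlinarith
      set Bm : Set ℝ := spectrum ℝ B ∩ {t | m * t ≤ lam} with hBmdef
      set Bp : Set ℝ := spectrum ℝ B ∩ {t | lam ≤ M * t} with hBpdef
      have hBmc : IsCompact Bm :=
        hcptB.inter_right (isClosed_le (continuous_const.mul continuous_id) continuous_const)
      have hBpc : IsCompact Bp :=
        hcptB.inter_right (isClosed_le continuous_const (continuous_const.mul continuous_id))
      have hBmne : Bm.Nonempty := ⟨bm, hbmmem, by simp only [Set.mem_setOf_eq]; nlinarith⟩
      have hBpne : Bp.Nonempty := ⟨bp, hbpmem, by simp only [Set.mem_setOf_eq]; nlinarith⟩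
      set βm := sSup Bm with hβmdef
      set βp := sInf Bp with hβpdef
      have hβmmem : βm ∈ Bm := hBmc.sSup_mem hBmne
      have hβpmem : βp ∈ Bp := hBpc.sInf_mem hBpne
      have hβm : M * βm < lam := (hdi _ hβmmem.1).resolve_right (not_lt.mpr hβmmem.2)
      have hβp : lam < m * βp := (hdi _ hβpmem.1).resolve_left (not_lt.mpr hβpmem.2)
      have hβmnn : 0 ≤ βm := spectrum_nonneg_of_nonneg hBnn hβmmem.1
      have hββ : βm < βp := by nlinarith
      have hcover : ∀ b ∈ spectrum ℝ B, b ∈ Bm ∨ b ∈ Bp := by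
        intro b hb
        have hbnn : 0 ≤ b := spectrum_nonneg_of_nonneg hBnn hb
        rcases hdi b hb with h | h
        · left; exact ⟨hb, by simp only [Set.mem_setOf_eq]; nlinarith⟩
        · right; exact ⟨hb, by simp only [Set.mem_setOf_eq]; nlinarith⟩
      have hle_βm : ∀ t ∈ Bm, t ≤ βm := fun t ht => le_csSup hBmc.bddAbove ht
      have hge_βp : ∀ t ∈ Bp, βp ≤ t := fun t ht => csInf_le hBpc.bddBelow ht
      set g : ℝ → ℝ := fun t => max 0 (min 1 ((t - βm) / (βp - βm))) with hgdef
      have hgc : Continuous g :=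
        continuous_const.max (continuous_const.min ((continuous_id.sub continuous_const).div_const _))
      have hg0 : ∀ t ∈ Bm, g t = 0 := by
        intro t ht
        have h1 : t ≤ βm := hle_βm t ht
        have h2 : (t - βm) / (βp - βm) ≤ 0 :=
          div_nonpos_of_nonpos_of_nonneg (by linarith) (by linarith)
        rw [hgdef]
        exact max_eq_left ((min_le_right _ _).trans h2)
      have hg1 : ∀ t ∈ Bp, g t = 1 := by
        intro t ht
        have h1 : βp ≤ t := hge_βp t ht
        have h2 : (1 : ℝ) ≤ (t - βm) / (βp - βm) := (le_div_iff₀ (by linarith)).mpr (by linarith)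
        rw [hgdef]
        simp only
        rw [min_eq_left h2, max_eq_right zero_le_one]
      have hg01 : ∀ t ∈ spectrum ℝ B, g t = 0 ∨ g t = 1 := fun t ht =>
        (hcover t ht).imp (hg0 t) (hg1 t)
      set P : H →L[ℂ] H := cfc g B with hPdef
      have hPsa : IsSelfAdjoint P := by rw [hPdef]; exact IsSelfAdjoint.cfc
      have hP2 : P * P = P := by
        rw [hPdef, ← cfc_mul g g B hgc.continuousOn hgc.continuousOn]
        exact cfc_congr fun t ht => by rcases hg01 t ht with h | h <;> simp [h]
      have hPsymm : ∀ a b : H, @inner ℂ _ _ (P a) b = @inner ℂ _ _ a (P b) := fun a b => by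
        simpa using hPsa.isSymmetric a b
      have hPx2 : ∀ x : H, RCLike.re (@inner ℂ _ _ (P x) x) = ‖P x‖ ^ 2 := by
        intro x
        have hPP : P x = P (P x) := by
          conv_lhs => rw [← hP2]
          rfl
        rw [hPP, hPsymm (P x) x, ← hPP, inner_self_eq_norm_sq]
      -- the operator inequality on the `P` side
      have hPBP : cfc (fun t => βp * g t) B ≤ cfc (fun t => g t * (t * g t)) B := by
        refine cfc_mono (fun t ht => ?_) ?_ ?_
        · rcases hcover t ht with h | h
          · rw [hg0 t h]; simp
          · rw [hg1 t h]
            have := hge_βp t h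
            nlinarith
        · exact (continuous_const.mul hgc).continuousOn
        · exact (hgc.mul (continuous_id.mul hgc)).continuousOn
      have e1 : cfc (fun t => g t * (t * g t)) B = P * (B * P) := by
        rw [cfc_mul g (fun t => t * g t) B hgc.continuousOn
            ((continuous_id.mul hgc).continuousOn),
          cfc_mul (fun t : ℝ => t) g B continuous_id.continuousOn hgc.continuousOn,
          cfc_id' ℝ B, hPdef]
      have e2 : cfc (fun t => βp * g t) B = βp • P := by
        have := cfc_smul βp g B hgc.continuousOn
        rw [hPdef]
        simpa [smul_eq_mul] using this
      have hBP_inner : ∀ x : H, βp * ‖P x‖ ^ 2 ≤ RCLike.re (@inner ℂ _ _ (B (P x)) (P x)) := by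
        intro x
        have h := inner_re_le_of_le' (e2 ▸ e1 ▸ hPBP) x
        rw [re_inner_smul_apply, hPx2] at h
        have hPBPx : (P * (B * P)) x = P (B (P x)) := rfl
        rwa [hPBPx, hPsymm (B (P x)) x] at h
      -- the operator inequality on the `1 - P` side
      set Q : H →L[ℂ] H := 1 - P with hQdef
      have hQcfc : Q = cfc (fun t => 1 - g t) B := by
        rw [cfc_sub (fun _ => (1 : ℝ)) g B continuous_const.continuousOn hgc.continuousOn,
          cfc_const 1 B, map_one, hQdef, hPdef]
      have hQsa : IsSelfAdjoint Q := (IsSelfAdjoint.one _).sub hPsa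
      have hQ2 : Q * Q = Q := by
        rw [hQdef, sub_mul, mul_sub, mul_sub, one_mul, mul_one, hP2]
        abel
      have hQsymm : ∀ a b : H, @inner ℂ _ _ (Q a) b = @inner ℂ _ _ a (Q b) := fun a b => by
        simpa using hQsa.isSymmetric a b
      have hQx2 : ∀ x : H, RCLike.re (@inner ℂ _ _ (Q x) x) = ‖Q x‖ ^ 2 := by
        intro x
        have hQQ : Q x = Q (Q x) := by
          conv_lhs => rw [← hQ2]
          rfl
        rw [hQQ, hQsymm (Q x) x, ← hQQ, inner_self_eq_norm_sq]
      have hQBQ : cfc (fun t => (1 - g t) * (t * (1 - g t))) B ≤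
          cfc (fun t => βm * (1 - g t)) B := by
        refine cfc_mono (fun t ht => ?_) ?_ ?_
        · rcases hcover t ht with h | h
          · rw [hg0 t h]
            have := hle_βm t h
            nlinarith
          · rw [hg1 t h]; simp
        · exact ((continuous_const.sub hgc).mul
            (continuous_id.mul (continuous_const.sub hgc))).continuousOn
        · exact (continuous_const.mul (continuous_const.sub hgc)).continuousOn
      have e1' : cfc (fun t => (1 - g t) * (t * (1 - g t))) B = Q * (B * Q) := by
        rw [cfc_mul (fun t => 1 - g t) (fun t => t * (1 - g t)) B
            (continuous_const.sub hgc).continuousOn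
            ((continuous_id.mul (continuous_const.sub hgc)).continuousOn),
          cfc_mul (fun t : ℝ => t) (fun t => 1 - g t) B continuous_id.continuousOn
            (continuous_const.sub hgc).continuousOn,
          cfc_id' ℝ B, ← hQcfc]
      have e2' : cfc (fun t => βm * (1 - g t)) B = βm • Q := by
        have := cfc_smul βm (fun t => 1 - g t) B (continuous_const.sub hgc).continuousOn
        rw [hQcfc]
        simpa [smul_eq_mul] using this
      have hBQ_inner : ∀ x : H, RCLike.re (@inner ℂ _ _ (B (Q x)) (Q x)) ≤ βm * ‖Q x‖ ^ 2 := by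
        intro x
        have h := inner_re_le_of_le' (e2' ▸ e1' ▸ hQBQ) x
        rw [re_inner_smul_apply, hQx2] at h
        have hQBQx : (Q * (B * Q)) x = Q (B (Q x)) := rfl
        rwa [hQBQx, hQsymm (B (Q x)) x] at h
      -- conclude via the abstract lemma
      refine isUnit_of_projection_bounds T P hTsa' hPsa hP2
        (ε := min (m * βp - lam) (lam - M * βm)) (lt_min (by linarith) (by linarith)) ?_ ?_
      · intro x
        rw [hTre (P x)]
        have e3 := hAlow (S (P x))
        have e4 := hSB (P x)
        have e5 := mul_le_mul_of_nonneg_left (hBP_inner x) hm0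
        have e6 := mul_le_mul_of_nonneg_right
          (min_le_left (m * βp - lam) (lam - M * βm)) (sq_nonneg ‖P x‖)
        nlinarith
      · intro x
        rw [← hQdef, hTre (Q x)]
        have e3 := hAup (S (Q x))
        have e4 := hSB (Q x)
        have e5 := mul_le_mul_of_nonneg_left (hBQ_inner x) hM0
        have e6 := mul_le_mul_of_nonneg_right
          (min_le_right (m * βp - lam) (lam - M * βm)) (sq_nonneg ‖Q x‖)
        nlinarith
end

section
/- Let {κₙ}ₙ∈ℤ be i.i.d. bounded positive random variables and φ ∈ L∞(𝕋) with φ̂₀ = 1. For Q_κ = √κ L_φ √κ on ℓ²(ℤ), the expectation E⟨Q_κ² δ₀, δ₀⟩ equals V(κ₀) + (E κ₀)² · ∑_{m∈ℤ} |φ̂ₘ|², where V(κ₀) is the variance of κ₀. -/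
open MeasureTheory ProbabilityTheory

/-- For `Q_κ = √κ L_φ √κ` on `ℓ²(ℤ)`, with `{κₙ}` i.i.d. bounded positive random variables
and `φ ∈ L∞(𝕋)` with Fourier coefficients `c` satisfying `c 0 = 1`, the expectation
`E⟨Q_κ² δ₀, δ₀⟩` equals `V(κ₀) + (E κ₀)² ∑ₘ |φ̂ₘ|²`. -/
theorem stmt10 {Ω : Type*} [MeasurableSpace Ω] (P : Measure Ω) [IsProbabilityMeasure P]
    (κ : ℤ → Ω → ℝ) (hmeas : ∀ n, Measurable (κ n))
    (hindep : iIndepFun κ P)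
    (hident : ∀ n : ℤ, P.map (κ n) = P.map (κ 0))
    (a b : ℝ) (ha : 0 < a) (hbound : ∀ n ω, a ≤ κ n ω ∧ κ n ω ≤ b)
    (c : ℤ → ℂ) (hc0 : c 0 = 1)
    (hcsymm : ∀ m : ℤ, c (-m) = starRingEnd ℂ (c m))
    (hcsum : Summable fun m : ℤ => ‖c m‖ ^ 2)
    (Q : Ω → lp (fun _ : ℤ => ℂ) 2 →L[ℂ] lp (fun _ : ℤ => ℂ) 2)
    (hQ : ∀ (ω : Ω) (n m : ℤ),
      (inner ℂ (lp.single 2 n (1 : ℂ)) ((Q ω) (lp.single 2 m (1 : ℂ))) : ℂ)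
        = (Real.sqrt (κ n ω) : ℂ) * c (n - m) * (Real.sqrt (κ m ω) : ℂ)) :
    ∫ ω, (inner ℂ (lp.single 2 0 (1 : ℂ)) ((Q ω ^ 2) (lp.single 2 0 (1 : ℂ))) : ℂ) ∂P
      = ((variance (κ 0) P
          + (∫ ω, κ 0 ω ∂P) ^ 2 * ∑' m : ℤ, ‖c m‖ ^ 2 : ℝ) : ℂ) := by
  classical
  have hκnonneg : ∀ n ω, (0:ℝ) ≤ κ n ω := fun n ω => (ha.trans_le (hbound n ω).1).le
  have hκle : ∀ n ω, κ n ω ≤ b := fun n ω => (hbound n ω).2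
  haveI : Nonempty Ω := by
    by_contra h
    rw [not_nonempty_iff] at h
    have h1 := measure_univ (μ := P)
    rw [Set.univ_eq_empty_iff.mpr h] at h1
    simp at h1
  have hb0 : (0:ℝ) ≤ b := (hκnonneg 0 (Classical.arbitrary Ω)).trans (hκle 0 _)
  set F : ℤ → Ω → ℝ := fun m ω => κ 0 ω * κ m ω * ‖c m‖ ^ 2 with hF
  have hFnonneg : ∀ m ω, 0 ≤ F m ω := fun m ω =>
    mul_nonneg (mul_nonneg (hκnonneg 0 ω) (hκnonneg m ω)) (sq_nonneg _)
  have hFle : ∀ m ω, F m ω ≤ b * b * ‖c m‖ ^ 2 := fun m ω => by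
    have := mul_le_mul (hκle 0 ω) (hκle m ω) (hκnonneg m ω) hb0
    exact mul_le_mul_of_nonneg_right this (sq_nonneg _)
  have hFsummable : ∀ ω, Summable fun m => F m ω := fun ω =>
    Summable.of_nonneg_of_le (fun m => hFnonneg m ω) (fun m => hFle m ω)
      (hcsum.mul_left (b * b))
  -- Step A: pointwise identity
  have hpoint : ∀ ω, (inner ℂ (lp.single 2 0 (1 : ℂ)) ((Q ω ^ 2) (lp.single 2 0 (1 : ℂ))) : ℂ)
      = ((∑' m : ℤ, F m ω : ℝ) : ℂ) := by
    intro ω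
    set δ : ℤ → lp (fun _ : ℤ => ℂ) 2 := fun n => lp.single 2 n (1 : ℂ) with hδ
    set y : lp (fun _ : ℤ => ℂ) 2 := Q ω (δ 0) with hy
    have hyval : ∀ m : ℤ, y m = (Real.sqrt (κ m ω) : ℂ) * c m * (Real.sqrt (κ 0 ω) : ℂ) := by
      intro m
      have h := hQ ω m 0
      rw [show (inner ℂ (lp.single 2 m (1:ℂ)) ((Q ω) (lp.single 2 0 (1:ℂ))) : ℂ)
            = (inner ℂ ((1:ℂ)) (y m) : ℂ) from lp.inner_single_left m 1 y] at h
      simpa using h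
    have h1 : HasSum (fun m : ℤ => lp.single 2 m (y m)) y :=
      lp.hasSum_single ENNReal.ofNat_ne_top y
    have h2 : HasSum (fun m : ℤ => Q ω (lp.single 2 m (y m))) (Q ω y) := (Q ω).hasSum h1
    have h3 : HasSum (fun m : ℤ => (inner ℂ (δ 0) (Q ω (lp.single 2 m (y m))) : ℂ))
        (inner ℂ (δ 0) (Q ω y) : ℂ) := (innerSL ℂ (δ 0)).hasSum h2
    have hterm : ∀ m : ℤ, (inner ℂ (δ 0) (Q ω (lp.single 2 m (y m))) : ℂ) = ((F m ω : ℝ) : ℂ) := by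
      intro m
      have hsingle : lp.single 2 m (y m) = y m • δ m := by
        rw [hδ, ← lp.single_smul]
        norm_num
      rw [hsingle, ContinuousLinearMap.map_smul, inner_smul_right, hyval m, hδ, hQ ω 0 m, zero_sub, hcsymm m]
      have e0 : ((Real.sqrt (κ 0 ω) : ℂ)) * ((Real.sqrt (κ 0 ω) : ℂ)) = ((κ 0 ω : ℝ) : ℂ) := by
        norm_cast
        exact Real.mul_self_sqrt (hκnonneg 0 ω)
      have em : ((Real.sqrt (κ m ω) : ℂ)) * ((Real.sqrt (κ m ω) : ℂ)) = ((κ m ω : ℝ) : ℂ) := by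
        norm_cast
        exact Real.mul_self_sqrt (hκnonneg m ω)
      have hcm : c m * (starRingEnd ℂ) (c m) = ((‖c m‖ ^ 2 : ℝ) : ℂ) := by
        rw [Complex.mul_conj]
        norm_cast
        rw [Complex.normSq_eq_norm_sq]
      calc (Real.sqrt (κ m ω) : ℂ) * c m * (Real.sqrt (κ 0 ω) : ℂ) *
            ((Real.sqrt (κ 0 ω) : ℂ) * (starRingEnd ℂ) (c m) * (Real.sqrt (κ m ω) : ℂ))
          = ((Real.sqrt (κ 0 ω) : ℂ) * (Real.sqrt (κ 0 ω) : ℂ)) *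
            (((Real.sqrt (κ m ω) : ℂ) * (Real.sqrt (κ m ω) : ℂ)) *
              (c m * (starRingEnd ℂ) (c m))) := by ring
        _ = ((F m ω : ℝ) : ℂ) := by
            rw [e0, em, hcm, hF]
            push_cast
            ring
    simp only [hterm] at h3
    have h5 : HasSum (fun m : ℤ => ((F m ω : ℝ) : ℂ)) (((∑' m : ℤ, F m ω : ℝ)) : ℂ) :=
      Complex.hasSum_ofReal.mpr (hFsummable ω).hasSum
    have h6 : (inner ℂ (δ 0) (Q ω y) : ℂ) = (((∑' m : ℤ, F m ω : ℝ)) : ℂ) := h3.unique h5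
    rw [sq, ContinuousLinearMap.mul_apply]
    exact h6
  -- Step B: reduce to a real integral
  have hB : ∫ ω, ((∑' m : ℤ, F m ω : ℝ) : ℂ) ∂P
      = ((∫ ω, ∑' m : ℤ, F m ω ∂P : ℝ) : ℂ) :=
    integral_ofReal (𝕜 := ℂ) (f := fun ω => ∑' m : ℤ, F m ω)
  rw [show (fun ω => (inner ℂ (lp.single 2 0 (1 : ℂ)) ((Q ω ^ 2) (lp.single 2 0 (1 : ℂ))) : ℂ))
      = fun ω => ((∑' m : ℤ, F m ω : ℝ) : ℂ) from funext hpoint, hB]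
  norm_cast
  -- Step C: compute the real integral
  have hInt : ∀ m : ℤ, Integrable (F m) P := by
    intro m
    refine ⟨(((hmeas 0).mul (hmeas m)).mul_const _).aestronglyMeasurable, ?_⟩
    apply HasFiniteIntegral.of_bounded (C := b * b * ‖c m‖ ^ 2)
    filter_upwards with ω
    rw [Real.norm_eq_abs, abs_of_nonneg (hFnonneg m ω)]
    exact hFle m ω
  have hIntNorm : ∀ m : ℤ, ∫ ω, ‖F m ω‖ ∂P ≤ b * b * ‖c m‖ ^ 2 := by
    intro m
    calc ∫ ω, ‖F m ω‖ ∂P ≤ ∫ _, b * b * ‖c m‖ ^ 2 ∂P := by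
          refine integral_mono (hInt m).norm (integrable_const _) fun ω => ?_
          rw [Real.norm_eq_abs, abs_of_nonneg (hFnonneg m ω)]
          exact hFle m ω
      _ = b * b * ‖c m‖ ^ 2 := by simp
  have hswap : ∫ ω, ∑' m : ℤ, F m ω ∂P = ∑' m : ℤ, ∫ ω, F m ω ∂P := by
    refine (integral_tsum_of_summable_integral_norm hInt ?_).symm
    refine Summable.of_nonneg_of_le (fun m => integral_nonneg fun ω => norm_nonneg _)
      hIntNorm (hcsum.mul_left (b * b))
  rw [hswap]
  -- compute each integral
  have hIntκ : ∀ n : ℤ, Integrable (κ n) P := by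
    intro n
    refine ⟨(hmeas n).aestronglyMeasurable, ?_⟩
    apply HasFiniteIntegral.of_bounded (C := b)
    filter_upwards with ω
    rw [Real.norm_eq_abs, abs_of_nonneg (hκnonneg n ω)]
    exact hκle n ω
  have hEκ : ∀ n : ℤ, ∫ ω, κ n ω ∂P = ∫ ω, κ 0 ω ∂P := by
    intro n
    have h1 : ∫ y, y ∂(P.map (κ n)) = ∫ ω, κ n ω ∂P :=
      integral_map (hmeas n).aemeasurable aestronglyMeasurable_id
    have h2 : ∫ y, y ∂(P.map (κ 0)) = ∫ ω, κ 0 ω ∂P :=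
      integral_map (hmeas 0).aemeasurable aestronglyMeasurable_id
    rw [← h1, ← h2, hident n]
  have hterm : ∀ m : ℤ, ∫ ω, F m ω ∂P
      = ((if m = 0 then ∫ ω, (κ 0 ω)^2 ∂P else (∫ ω, κ 0 ω ∂P)^2) * ‖c m‖ ^ 2) := by
    intro m
    rw [hF]
    simp only
    rw [integral_mul_const]
    congr 1
    by_cases hm : m = 0
    · subst hm
      simp [sq]
    · rw [if_neg hm]
      have hIndep : IndepFun (κ 0) (κ m) P := hindep.indepFun (fun h => hm h.symm)
      have hmul : ∫ ω, κ 0 ω * κ m ω ∂P = (∫ ω, κ 0 ω ∂P) * ∫ ω, κ m ω ∂P :=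
        hIndep.integral_fun_mul_eq_mul_integral (hIntκ 0).1 (hIntκ m).1
      rw [hmul, hEκ m, sq]
  rw [tsum_congr hterm]
  -- split off the m = 0 term
  have hsq : MemLp (κ 0) 2 P := by
    refine MemLp.mono_exponent ?_ le_top
    exact memLp_top_of_bound (hmeas 0).aestronglyMeasurable b (by
      filter_upwards with ω
      rw [Real.norm_eq_abs, abs_of_nonneg (hκnonneg 0 ω)]
      exact hκle 0 ω)
  have hvar : variance (κ 0) P = (∫ ω, (κ 0 ω)^2 ∂P) - (∫ ω, κ 0 ω ∂P)^2 := by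
    rw [variance_eq_sub hsq]
    rfl
  set E1 := ∫ ω, κ 0 ω ∂P
  set E2 := ∫ ω, (κ 0 ω)^2 ∂P
  have hsplit : ∀ m : ℤ, (if m = 0 then E2 else E1^2) * ‖c m‖ ^ 2
      = E1^2 * ‖c m‖ ^ 2 + (if m = 0 then E2 - E1^2 else 0) := by
    intro m
    by_cases hm : m = 0
    · subst hm
      simp [hc0]
    · simp [hm]
  rw [tsum_congr hsplit, Summable.tsum_add (hcsum.mul_left (E1^2)) ?_, tsum_mul_left,
    (tsum_ite_eq (0:ℤ) (fun _ => E2 - E1^2) :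
      (∑' b : ℤ, if b = 0 then E2 - E1^2 else 0) = E2 - E1^2)]
  · rw [hvar]; ring
  · exact summable_of_ne_finset_zero (s := {0}) (fun m hm => by
      simp at hm
      simp [hm])
end

section
/- Let {ωₙ}ₙ∈ℤ be i.i.d. Bernoulli random variables taking value 1 with probability q ∈ (0,1) and 0 with probability 1 − q. Then almost surely, ∫₁^∞ (|n₊(t) − qt| + |n₋(t) − qt|) t^{−2} dt < ∞, where n₊(t) = #{0 < n < t : ωₙ = 1} and n₋(t) = #{−t < n < 0 : ωₙ = 1}. That is, the support of ω has Kahane density q almost surely. -/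
open MeasureTheory ProbabilityTheory
open scoped ENNReal

set_option linter.unusedSectionVars false

section Stmt12Aux
variable {Ω : Type*} [MeasurableSpace Ω] {P : Measure Ω} [IsProbabilityMeasure P]
  {q : ℝ} {X : ℤ → Ω → ℝ}

lemma stmt12_card_pos_eq (hval : ∀ n ω, X n ω = 0 ∨ X n ω = 1) (t : ℝ) (ω : Ω) :
    ((Nat.card {n : ℤ | 0 < (n : ℝ) ∧ (n : ℝ) < t ∧ X n ω = 1} : ℕ) : ℝ)
      = ∑ n ∈ Finset.Ioo (0:ℤ) ⌈t⌉, X n ω := by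
  classical
  have hset : {n : ℤ | 0 < (n : ℝ) ∧ (n : ℝ) < t ∧ X n ω = 1}
      = ((Finset.Ioo (0:ℤ) ⌈t⌉).filter (fun n => X n ω = 1) : Finset ℤ) := by
    ext n
    simp only [Set.mem_setOf_eq, Finset.coe_filter, Finset.mem_Ioo, Int.lt_ceil,
      Int.cast_pos, and_assoc]
  rw [hset, Nat.card_coe_set_eq, Set.ncard_coe_finset, ← Finset.sum_boole]
  refine Finset.sum_congr rfl fun n _ => ?_
  rcases hval n ω with h | h <;> simp [h]

lemma stmt12_card_neg_eq (hval : ∀ n ω, X n ω = 0 ∨ X n ω = 1) (t : ℝ) (ω : Ω) :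
    ((Nat.card {n : ℤ | -t < (n : ℝ) ∧ (n : ℝ) < 0 ∧ X n ω = 1} : ℕ) : ℝ)
      = ∑ n ∈ Finset.Ioo (-⌈t⌉) (0:ℤ), X n ω := by
  classical
  have hset : {n : ℤ | -t < (n : ℝ) ∧ (n : ℝ) < 0 ∧ X n ω = 1}
      = ((Finset.Ioo (-⌈t⌉) (0:ℤ)).filter (fun n => X n ω = 1) : Finset ℤ) := by
    ext n
    have h1 : -t < (n : ℝ) ↔ -⌈t⌉ < n := by
      rw [neg_lt, ← Int.cast_neg, ← Int.lt_ceil]; omega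
    simp only [Set.mem_setOf_eq, Finset.coe_filter, Finset.mem_Ioo, h1, and_assoc]
    have h2 : (n : ℝ) < 0 ↔ n < 0 := by exact_mod_cast Int.cast_lt_zero
    rw [h2]
  rw [hset, Nat.card_coe_set_eq, Set.ncard_coe_finset, ← Finset.sum_boole]
  refine Finset.sum_congr rfl fun n _ => ?_
  rcases hval n ω with h | h <;> simp [h]

lemma stmt12_memL2 (hmeas : ∀ n, Measurable (X n)) (hval : ∀ n ω, X n ω = 0 ∨ X n ω = 1)
    (n : ℤ) : MemLp (X n) 2 P := by
  refine MemLp.of_bound (hmeas n).aestronglyMeasurable 1 (ae_of_all _ fun ω => ?_)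
  rcases hval n ω with h | h <;> simp [h]

lemma stmt12_intX (hmeas : ∀ n, Measurable (X n)) (hval : ∀ n ω, X n ω = 0 ∨ X n ω = 1)
    (n : ℤ) : Integrable (X n) P := (stmt12_memL2 hmeas hval n).integrable one_le_two

lemma stmt12_EX (hq0 : 0 ≤ q) (hmeas : ∀ n, Measurable (X n)) (hval : ∀ n ω, X n ω = 0 ∨ X n ω = 1)
    (hberP : ∀ n : ℤ, P {ω | X n ω = 1} = ENNReal.ofReal q) (n : ℤ) :
    ∫ ω, X n ω ∂P = q := by
  have hXind : X n = (X n ⁻¹' {1}).indicator (1 : Ω → ℝ) := by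
    funext ω
    by_cases h : X n ω = 1
    · simp [Set.indicator, h]
    · rcases hval n ω with h0 | h0
      · simp [Set.indicator, h, h0]
      · exact absurd h0 h
  have hms : MeasurableSet (X n ⁻¹' {1}) := (hmeas n) (measurableSet_singleton 1)
  have hpre : X n ⁻¹' {1} = {ω | X n ω = 1} := rfl
  rw [hXind, integral_indicator_one hms, hpre, measureReal_def, hberP n, ENNReal.toReal_ofReal hq0]

lemma stmt12_EX2 (hq0 : 0 ≤ q) (hmeas : ∀ n, Measurable (X n))
    (hval : ∀ n ω, X n ω = 0 ∨ X n ω = 1)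
    (hberP : ∀ n : ℤ, P {ω | X n ω = 1} = ENNReal.ofReal q) (n : ℤ) :
    ∫ ω, (X n ω) ^ 2 ∂P = q := by
  have : ∀ ω, (X n ω) ^ 2 = X n ω := fun ω => by rcases hval n ω with h | h <;> simp [h]
  simp only [this]; exact stmt12_EX hq0 hmeas hval hberP n

lemma stmt12_varX (hq0 : 0 ≤ q) (hmeas : ∀ n, Measurable (X n))
    (hval : ∀ n ω, X n ω = 0 ∨ X n ω = 1)
    (hberP : ∀ n : ℤ, P {ω | X n ω = 1} = ENNReal.ofReal q) (n : ℤ) :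
    variance (X n) P = q - q ^ 2 := by
  rw [variance_eq_sub (stmt12_memL2 hmeas hval n)]
  have h1 : ∫ ω, (X n ^ 2) ω ∂P = q := by
    simpa [Pi.pow_apply] using stmt12_EX2 (P := P) hq0 hmeas hval hberP n
  rw [show (P[X n ^ 2]) = q from h1, show (P[X n]) = q from stmt12_EX hq0 hmeas hval hberP n]

lemma stmt12_Esum (hq0 : 0 ≤ q) (hmeas : ∀ n, Measurable (X n))
    (hval : ∀ n ω, X n ω = 0 ∨ X n ω = 1)
    (hberP : ∀ n : ℤ, P {ω | X n ω = 1} = ENNReal.ofReal q) (s : Finset ℤ) :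
    ∫ ω, ∑ n ∈ s, X n ω ∂P = s.card * q := by
  rw [integral_finset_sum s fun n _ => stmt12_intX hmeas hval n]
  simp [stmt12_EX hq0 hmeas hval hberP]

lemma stmt12_varSum (hq0 : 0 ≤ q) (hmeas : ∀ n, Measurable (X n))
    (hval : ∀ n ω, X n ω = 0 ∨ X n ω = 1)
    (hberP : ∀ n : ℤ, P {ω | X n ω = 1} = ENNReal.ofReal q)
    (hindep : iIndepFun X P) (s : Finset ℤ) :
    variance (∑ n ∈ s, X n) P = s.card * (q - q ^ 2) := by
  rw [IndepFun.variance_sum (fun n _ => stmt12_memL2 hmeas hval n)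
    (fun i _ j _ hij => hindep.indepFun hij)]
  simp [stmt12_varX hq0 hmeas hval hberP, mul_comm]
  ring

lemma stmt12_sqIntegral (hq0 : 0 ≤ q) (hmeas : ∀ n, Measurable (X n))
    (hval : ∀ n ω, X n ω = 0 ∨ X n ω = 1)
    (hberP : ∀ n : ℤ, P {ω | X n ω = 1} = ENNReal.ofReal q)
    (hindep : iIndepFun X P) (s : Finset ℤ) :
    ∫⁻ ω, ENNReal.ofReal ((∑ n ∈ s, X n ω - q * s.card) ^ 2) ∂P
      = ENNReal.ofReal (s.card * (q - q ^ 2)) := by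
  have hS2 : MemLp (∑ n ∈ s, X n) 2 P :=
    memLp_finsetSum' s fun n _ => stmt12_memL2 hmeas hval n
  have hdiff : MemLp ((∑ n ∈ s, X n) - fun _ => q * s.card) 2 P :=
    hS2.sub (memLp_const _)
  have hint : Integrable (fun ω => (∑ n ∈ s, X n ω - q * s.card) ^ 2) P := by
    have := hdiff.integrable_sq
    simpa [Finset.sum_apply] using this
  rw [← ofReal_integral_eq_lintegral_ofReal hint (ae_of_all _ fun ω => sq_nonneg _)]
  congr 1
  have hES : (P[∑ n ∈ s, X n]) = q * s.card := by
    have h1 : ∫ ω, (∑ n ∈ s, X n) ω ∂P = ∫ ω, ∑ n ∈ s, X n ω ∂P := by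
      simp [Finset.sum_apply]
    rw [h1, stmt12_Esum hq0 hmeas hval hberP s, mul_comm]
  have hvar := variance_eq_integral hS2.aemeasurable
  rw [stmt12_varSum hq0 hmeas hval hberP hindep s, hES] at hvar
  rw [hvar]
  exact integral_congr_ae (ae_of_all _ fun ω => by simp [Finset.sum_apply])

lemma stmt12_absBound (hq0 : 0 ≤ q) (hq1 : q ≤ 1) (hmeas : ∀ n, Measurable (X n))
    (hval : ∀ n ω, X n ω = 0 ∨ X n ω = 1)
    (hberP : ∀ n : ℤ, P {ω | X n ω = 1} = ENNReal.ofReal q)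
    (hindep : iIndepFun X P) (s : Finset ℤ) :
    ∫⁻ ω, ENNReal.ofReal |∑ n ∈ s, X n ω - q * s.card| ∂P
      ≤ ENNReal.ofReal (Real.sqrt s.card) := by
  set f : Ω → ℝ≥0∞ := fun ω => ENNReal.ofReal |∑ n ∈ s, X n ω - q * s.card| with hfdef
  have hfm : Measurable f := by
    apply ENNReal.measurable_ofReal.comp
    exact ((Finset.measurable_sum s fun n _ => hmeas n).sub measurable_const).abs
  have hpq : Real.HolderConjugate 2 2 := Real.HolderConjugate.two_two
  have hcs := ENNReal.lintegral_mul_le_Lp_mul_Lq P hpq hfm.aemeasurable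
    (aemeasurable_const : AEMeasurable (fun _ : Ω => (1:ℝ≥0∞)) P)
  simp only [mul_one, Pi.mul_apply] at hcs
  have hone : (∫⁻ _ : Ω, (1:ℝ≥0∞) ^ (2:ℝ) ∂P) = 1 := by simp
  have hf2 : (∫⁻ ω, f ω ^ (2:ℝ) ∂P) = ENNReal.ofReal (s.card * (q - q ^ 2)) := by
    rw [← stmt12_sqIntegral hq0 hmeas hval hberP hindep s]
    refine lintegral_congr fun ω => ?_
    show ENNReal.ofReal |∑ n ∈ s, X n ω - q * s.card| ^ (2:ℝ) = _
    rw [ENNReal.ofReal_rpow_of_nonneg (abs_nonneg _) (by norm_num : (0:ℝ) ≤ 2)]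
    congr 1
    rw [show ((2:ℝ)) = ((2:ℕ):ℝ) by norm_num, Real.rpow_natCast, sq_abs]
  calc ∫⁻ ω, f ω ∂P
      ≤ (∫⁻ ω, f ω ^ (2:ℝ) ∂P) ^ (1/(2:ℝ)) * (∫⁻ _ : Ω, (1:ℝ≥0∞) ^ (2:ℝ) ∂P) ^ (1/(2:ℝ)) := hcs
    _ = (ENNReal.ofReal (s.card * (q - q ^ 2))) ^ (1/(2:ℝ)) := by rw [hf2, hone]; simp
    _ ≤ (ENNReal.ofReal (s.card : ℝ)) ^ (1/(2:ℝ)) := by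
        refine ENNReal.rpow_le_rpow (ENNReal.ofReal_le_ofReal ?_) (by norm_num)
        nlinarith [Nat.cast_nonneg (α := ℝ) s.card]
    _ = ENNReal.ofReal (Real.sqrt s.card) := by
        rw [ENNReal.ofReal_rpow_of_nonneg (Nat.cast_nonneg _) (by norm_num),
          Real.sqrt_eq_rpow]

lemma stmt12_outerFinite : ∫⁻ t in Set.Ioi (1:ℝ),
    ENNReal.ofReal ((2 * Real.sqrt t + 2) / t ^ 2) < ⊤ := by
  have hint : IntegrableOn (fun t : ℝ => (2 * Real.sqrt t + 2) / t ^ 2) (Set.Ioi 1) := by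
    refine Integrable.mono'
      ((integrableOn_Ioi_rpow_of_lt (show (-(3/2):ℝ) < -1 by norm_num) one_pos).const_mul 4)
      ?_ ?_
    · exact (((measurable_const.mul Real.continuous_sqrt.measurable).add measurable_const).div
        (measurable_id.pow_const 2)).aestronglyMeasurable
    · rw [ae_restrict_iff' measurableSet_Ioi]
      refine ae_of_all _ fun t ht => ?_
      have ht1 : (1:ℝ) < t := ht
      have ht0 : (0:ℝ) < t := lt_trans one_pos ht1
      have hs1 : (1:ℝ) ≤ Real.sqrt t := by
        rw [show (1:ℝ) = Real.sqrt 1 by simp]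
        exact Real.sqrt_le_sqrt ht1.le
      rw [Real.norm_eq_abs, abs_of_nonneg (by positivity)]
      have key : (2 * Real.sqrt t + 2) / t ^ 2 ≤ 4 * Real.sqrt t / t ^ 2 := by
        gcongr
        linarith
      refine key.trans (le_of_eq ?_)
      rw [Real.sqrt_eq_rpow, show (t:ℝ) ^ (2:ℕ) = t ^ ((2:ℕ):ℝ) by rw [Real.rpow_natCast],
        mul_div_assoc, ← Real.rpow_sub ht0]
      norm_num
  exact hint.setLIntegral_lt_top

end Stmt12Aux


lemma stmt12_tail {Ω : Type*} [MeasurableSpace Ω] (P : Measure Ω) [IsProbabilityMeasure P]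
    (q : ℝ) (S T : ℤ → Ω → ℝ) (hSm : ∀ k, Measurable (S k)) (hTm : ∀ k, Measurable (T k))
    (hbound : ∀ t ∈ Set.Ioi (1:ℝ),
      ∫⁻ ω, ENNReal.ofReal ((|S ⌈t⌉ ω - q * t| + |T ⌈t⌉ ω - q * t|) / t ^ 2) ∂P
        ≤ ENNReal.ofReal ((2 * Real.sqrt t + 2) / t ^ 2)) :
    ∀ᵐ ω ∂P, (∫⁻ t in Set.Ioi (1:ℝ),
      ENNReal.ofReal ((|S ⌈t⌉ ω - q * t| + |T ⌈t⌉ ω - q * t|) / t ^ 2)) < ⊤ := by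
  have hA : Measurable (fun p : Ω × ℝ => S ⌈p.2⌉ p.1) := by
    have h1 : Measurable (fun p : (Ω × ℝ) × ℤ => S p.2 p.1.1) :=
      measurable_from_prod_countable_left fun k => (hSm k).comp measurable_fst
    exact h1.comp (measurable_id.prodMk (Int.measurable_ceil.comp measurable_snd))
  have hB : Measurable (fun p : Ω × ℝ => T ⌈p.2⌉ p.1) := by
    have h1 : Measurable (fun p : (Ω × ℝ) × ℤ => T p.2 p.1.1) :=
      measurable_from_prod_countable_left fun k => (hTm k).comp measurable_fst
    exact h1.comp (measurable_id.prodMk (Int.measurable_ceil.comp measurable_snd))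
  have hGm : Measurable (fun p : Ω × ℝ =>
      ENNReal.ofReal ((|S ⌈p.2⌉ p.1 - q * p.2| + |T ⌈p.2⌉ p.1 - q * p.2|) / p.2 ^ 2)) := by
    refine ENNReal.measurable_ofReal.comp ?_
    refine Measurable.div ?_ (measurable_snd.pow_const 2)
    exact ((hA.sub (measurable_const.mul measurable_snd)).abs.add
      ((hB.sub (measurable_const.mul measurable_snd)).abs))
  have hswap : ∫⁻ ω, (∫⁻ t in Set.Ioi (1:ℝ),
        ENNReal.ofReal ((|S ⌈t⌉ ω - q * t| + |T ⌈t⌉ ω - q * t|) / t ^ 2)) ∂P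
      = ∫⁻ t in Set.Ioi (1:ℝ), ∫⁻ ω,
        ENNReal.ofReal ((|S ⌈t⌉ ω - q * t| + |T ⌈t⌉ ω - q * t|) / t ^ 2) ∂P :=
    lintegral_lintegral_swap hGm.aemeasurable
  have hfin : ∫⁻ ω, (∫⁻ t in Set.Ioi (1:ℝ),
      ENNReal.ofReal ((|S ⌈t⌉ ω - q * t| + |T ⌈t⌉ ω - q * t|) / t ^ 2)) ∂P < ⊤ := by
    rw [hswap]
    calc ∫⁻ t in Set.Ioi (1:ℝ), ∫⁻ ω,
          ENNReal.ofReal ((|S ⌈t⌉ ω - q * t| + |T ⌈t⌉ ω - q * t|) / t ^ 2) ∂P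
        ≤ ∫⁻ t in Set.Ioi (1:ℝ), ENNReal.ofReal ((2 * Real.sqrt t + 2) / t ^ 2) :=
          setLIntegral_mono' measurableSet_Ioi hbound
      _ < ⊤ := stmt12_outerFinite
  exact ae_lt_top (Measurable.lintegral_prod_right' hGm) hfin.ne

lemma stmt12_tbound {Ω : Type*} [MeasurableSpace Ω] {P : Measure Ω} [IsProbabilityMeasure P]
    {q : ℝ} {X : ℤ → Ω → ℝ} (hq0 : 0 < q) (hq1 : q < 1)
    (hmeas : ∀ n, Measurable (X n)) (hval : ∀ n ω, X n ω = 0 ∨ X n ω = 1)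
    (hberP : ∀ n : ℤ, P {ω | X n ω = 1} = ENNReal.ofReal q)
    (hindep : iIndepFun X P)
    (t : ℝ) (ht1 : 1 < t) :
    ∫⁻ ω, ENNReal.ofReal ((|∑ n ∈ Finset.Ioo (0:ℤ) ⌈t⌉, X n ω - q * t|
        + |∑ n ∈ Finset.Ioo (-⌈t⌉) (0:ℤ), X n ω - q * t|) / t ^ 2) ∂P
      ≤ ENNReal.ofReal ((2 * Real.sqrt t + 2) / t ^ 2) := by
  have ht0 : (0:ℝ) < t := lt_trans one_pos ht1
  set A : Ω → ℝ := fun ω => ∑ n ∈ Finset.Ioo (0:ℤ) ⌈t⌉, X n ω with hAdef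
  set B : Ω → ℝ := fun ω => ∑ n ∈ Finset.Ioo (-⌈t⌉) (0:ℤ), X n ω with hBdef
  have hAm : Measurable A := Finset.measurable_sum _ fun n _ => hmeas n
  have hBm : Measurable B := Finset.measurable_sum _ fun n _ => hmeas n
  set m : ℕ := (Finset.Ioo (0:ℤ) ⌈t⌉).card with hm
  have hmneg : (Finset.Ioo (-⌈t⌉) (0:ℤ)).card = m := by
    rw [hm, Int.card_Ioo, Int.card_Ioo]
    congr 1
    ring
  have hmr : (m:ℝ) = (⌈t⌉:ℝ) - 1 := by
    rw [hm, Int.card_Ioo]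
    have hc : (1:ℤ) ≤ ⌈t⌉ := by
      have h := Int.le_ceil t
      have : (1:ℝ) ≤ (⌈t⌉:ℝ) := le_trans ht1.le h
      exact_mod_cast this
    rw [show (⌈t⌉ - 0 - 1 : ℤ) = ⌈t⌉ - 1 by ring]
    rw [← Int.cast_natCast, Int.toNat_of_nonneg (by omega)]
    push_cast
    ring
  have hmle : (m:ℝ) ≤ t := by
    rw [hmr]
    have := Int.ceil_lt_add_one t
    linarith
  have hmge : t - 1 ≤ (m:ℝ) := by
    rw [hmr]
    have := Int.le_ceil t
    linarith
  have hptw : ∀ ω, ENNReal.ofReal ((|A ω - q * t| + |B ω - q * t|) / t ^ 2) ≤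
      (ENNReal.ofReal |A ω - q * (m:ℝ)| + ENNReal.ofReal |B ω - q * (m:ℝ)|
        + ENNReal.ofReal 2) * ENNReal.ofReal ((t ^ 2)⁻¹) := by
    intro ω
    have habs : |q * (m:ℝ) - q * t| ≤ 1 := by
      rw [← mul_sub, abs_mul, abs_of_nonneg hq0.le]
      have h1 : |(m:ℝ) - t| ≤ 1 := abs_le.2 ⟨by linarith, by linarith⟩
      nlinarith [abs_nonneg ((m:ℝ) - t)]
    have h1 : |A ω - q * t| ≤ |A ω - q * (m:ℝ)| + 1 := by
      calc |A ω - q * t| = |(A ω - q * (m:ℝ)) + (q * (m:ℝ) - q * t)| := by ring_nf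
        _ ≤ |A ω - q * (m:ℝ)| + |q * (m:ℝ) - q * t| := abs_add_le _ _
        _ ≤ |A ω - q * (m:ℝ)| + 1 := by linarith
    have h2 : |B ω - q * t| ≤ |B ω - q * (m:ℝ)| + 1 := by
      calc |B ω - q * t| = |(B ω - q * (m:ℝ)) + (q * (m:ℝ) - q * t)| := by ring_nf
        _ ≤ |B ω - q * (m:ℝ)| + |q * (m:ℝ) - q * t| := abs_add_le _ _
        _ ≤ |B ω - q * (m:ℝ)| + 1 := by linarith
    rw [div_eq_mul_inv, ENNReal.ofReal_mul (by positivity)]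
    refine mul_le_mul_left ?_ _
    calc ENNReal.ofReal (|A ω - q * t| + |B ω - q * t|)
        ≤ ENNReal.ofReal (|A ω - q * (m:ℝ)| + |B ω - q * (m:ℝ)| + 2) :=
          ENNReal.ofReal_le_ofReal (by linarith)
      _ = _ := by
          rw [ENNReal.ofReal_add (by positivity) (by norm_num : (0:ℝ) ≤ 2),
            ENNReal.ofReal_add (abs_nonneg _) (abs_nonneg _)]
  have hmeas1 : Measurable fun ω => ENNReal.ofReal |A ω - q * (m:ℝ)| :=
    ENNReal.measurable_ofReal.comp (hAm.sub measurable_const).abs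
  have hmeas2 : Measurable fun ω => ENNReal.ofReal |B ω - q * (m:ℝ)| :=
    ENNReal.measurable_ofReal.comp (hBm.sub measurable_const).abs
  have habs1 : ∫⁻ ω, ENNReal.ofReal |A ω - q * (m:ℝ)| ∂P ≤ ENNReal.ofReal (Real.sqrt m) := by
    have := stmt12_absBound hq0.le hq1.le hmeas hval hberP hindep (Finset.Ioo (0:ℤ) ⌈t⌉)
    rw [← hm] at this
    exact this
  have habs2 : ∫⁻ ω, ENNReal.ofReal |B ω - q * (m:ℝ)| ∂P ≤ ENNReal.ofReal (Real.sqrt m) := by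
    have := stmt12_absBound hq0.le hq1.le hmeas hval hberP hindep (Finset.Ioo (-⌈t⌉) (0:ℤ))
    rw [hmneg] at this
    exact this
  calc ∫⁻ ω, ENNReal.ofReal ((|A ω - q * t| + |B ω - q * t|) / t ^ 2) ∂P
      ≤ ∫⁻ ω, (ENNReal.ofReal |A ω - q * (m:ℝ)| + ENNReal.ofReal |B ω - q * (m:ℝ)|
          + ENNReal.ofReal 2) * ENNReal.ofReal ((t ^ 2)⁻¹) ∂P := lintegral_mono hptw
    _ = (∫⁻ ω, (ENNReal.ofReal |A ω - q * (m:ℝ)| + ENNReal.ofReal |B ω - q * (m:ℝ)|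
          + ENNReal.ofReal 2) ∂P) * ENNReal.ofReal ((t ^ 2)⁻¹) :=
        lintegral_mul_const'' _ ((hmeas1.add hmeas2).add measurable_const).aemeasurable
    _ ≤ (ENNReal.ofReal (Real.sqrt m) + ENNReal.ofReal (Real.sqrt m) + ENNReal.ofReal 2)
          * ENNReal.ofReal ((t ^ 2)⁻¹) := by
        refine mul_le_mul_left ?_ _
        rw [lintegral_add_right _ measurable_const, lintegral_add_right _ hmeas2,
          lintegral_const, measure_univ, mul_one]
        exact add_le_add (add_le_add habs1 habs2) le_rfl
    _ ≤ ENNReal.ofReal (2 * Real.sqrt t + 2) * ENNReal.ofReal ((t ^ 2)⁻¹) := by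
        refine mul_le_mul_left ?_ _
        rw [← ENNReal.ofReal_add (Real.sqrt_nonneg _) (Real.sqrt_nonneg _),
          ← ENNReal.ofReal_add (by positivity) (by norm_num : (0:ℝ) ≤ 2)]
        refine ENNReal.ofReal_le_ofReal ?_
        have := Real.sqrt_le_sqrt hmle
        linarith
    _ = ENNReal.ofReal ((2 * Real.sqrt t + 2) / t ^ 2) := by
        rw [← ENNReal.ofReal_mul (by positivity), div_eq_mul_inv]

/-- For i.i.d. Bernoulli(q) variables `{ωₙ}ₙ∈ℤ` (value 1 with probability `q ∈ (0,1)`),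
almost surely `∫₁^∞ (|n₊(t) - qt| + |n₋(t) - qt|) t⁻² dt < ∞`, where `n₊(t)`, `n₋(t)` count
the indices `0 < n < t`, resp. `-t < n < 0`, with `ωₙ = 1`: the support of `ω` has Kahane
density `q` almost surely. -/
theorem stmt12 {Ω : Type*} [MeasurableSpace Ω] (P : Measure Ω) [IsProbabilityMeasure P]
    (q : ℝ) (hq0 : 0 < q) (hq1 : q < 1)
    (X : ℤ → Ω → ℝ) (hmeas : ∀ n, Measurable (X n))
    (hval : ∀ n ω, X n ω = 0 ∨ X n ω = 1)
    (hberP : ∀ n : ℤ, P {ω | X n ω = 1} = ENNReal.ofReal q)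
    (hindep : iIndepFun X P) :
    ∀ᵐ ω ∂P,
      (∫⁻ t in Set.Ioi (1 : ℝ),
        ENNReal.ofReal
          ((|((Nat.card {n : ℤ | 0 < (n : ℝ) ∧ (n : ℝ) < t ∧ X n ω = 1} : ℕ) : ℝ) - q * t|
            + |((Nat.card {n : ℤ | -t < (n : ℝ) ∧ (n : ℝ) < 0 ∧ X n ω = 1} : ℕ) : ℝ) - q * t|)
           / t ^ 2)) < ⊤ := by
  have htail := stmt12_tail P q (fun k ω => ∑ n ∈ Finset.Ioo (0:ℤ) k, X n ω)
    (fun k ω => ∑ n ∈ Finset.Ioo (-k) (0:ℤ), X n ω)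
    (fun k => Finset.measurable_sum _ fun n _ => hmeas n)
    (fun k => Finset.measurable_sum _ fun n _ => hmeas n)
    (fun t ht => stmt12_tbound hq0 hq1 hmeas hval hberP hindep t ht)
  filter_upwards [htail] with ω hω
  have hrw : (∫⁻ t in Set.Ioi (1:ℝ),
      ENNReal.ofReal
        ((|((Nat.card {n : ℤ | 0 < (n : ℝ) ∧ (n : ℝ) < t ∧ X n ω = 1} : ℕ) : ℝ) - q * t|
          + |((Nat.card {n : ℤ | -t < (n : ℝ) ∧ (n : ℝ) < 0 ∧ X n ω = 1} : ℕ) : ℝ) - q * t|)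
         / t ^ 2))
      = ∫⁻ t in Set.Ioi (1:ℝ),
        ENNReal.ofReal ((|∑ n ∈ Finset.Ioo (0:ℤ) ⌈t⌉, X n ω - q * t|
          + |∑ n ∈ Finset.Ioo (-⌈t⌉) (0:ℤ), X n ω - q * t|) / t ^ 2) := by
    refine lintegral_congr fun t => ?_
    rw [stmt12_card_pos_eq hval t ω, stmt12_card_neg_eq hval t ω]
  rw [hrw]
  exact hω
end

section
/- Let Q_κ = √κ L_φ √κ on ℓ²(ℤ) with κₙ > 0, and P_κ = L_θ κ L_θ where θ = √φ ≥ 0. Then for every z with Im z > 0 and every m ∈ ℤ, δ_{0,m} + z ⟨(Q_κ − z)^{−1} δ₀, δₘ⟩ = √(κ₀ κₘ) ⟨(P_κ − z)^{−1} ψ₀, ψₘ⟩, where ψₙ = L_θ δₙ. -/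
open ContinuousLinearMap

private lemma stmt14_isUnit {E : Type*} [NormedAddCommGroup E] [InnerProductSpace ℂ E]
    [CompleteSpace E] (T : E →L[ℂ] E) (h : IsSelfAdjoint T) (z : ℂ) (hz : 0 < z.im) :
    IsUnit (T - z • (1 : E →L[ℂ] E)) := by
  have hmem : z ∉ spectrum ℂ T := by
    intro hm
    have := h.mem_spectrum_eq_re hm
    rw [this] at hz
    simp at hz
  have := spectrum.notMem_iff.mp hmem
  rw [Algebra.algebraMap_eq_smul_one] at this
  simpa [neg_sub] using this.neg

private lemma stmt14_ring {R : Type*} [Ring R] [Algebra ℂ R] (a b : R) (z : ℂ)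
    (h1 : IsUnit (a * b - z • 1)) (h2 : IsUnit (b * a - z • 1)) :
    1 + z • Ring.inverse (a * b - z • 1)
      = a * (Ring.inverse (b * a - z • 1) * b) := by
  set u := Ring.inverse (a * b - z • 1) with hu
  set v := Ring.inverse (b * a - z • 1) with hv
  have key : (a * b - z • 1) * a = a * (b * a - z • 1) := by
    rw [sub_mul, mul_sub, smul_mul_assoc, mul_smul_comm, one_mul, mul_one, mul_assoc]
  have hua : u * a = a * v := by
    calc u * a = u * (a * ((b * a - z • 1) * v)) := by
          rw [Ring.mul_inverse_cancel _ h2, mul_one]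
      _ = u * (((a * b - z • 1) * a) * v) := by rw [← mul_assoc a, ← key]
      _ = (u * (a * b - z • 1)) * (a * v) := by noncomm_ring
      _ = a * v := by rw [Ring.inverse_mul_cancel _ h1, one_mul]
  have huab : u * (a * b) = 1 + z • u := by
    have h := Ring.inverse_mul_cancel _ h1
    rw [← hu] at h
    have h' : u * (a * b) - u * (z • 1) = 1 := by rw [← mul_sub, h]
    rw [mul_smul_comm, mul_one] at h'
    linear_combination (norm := noncomm_ring) h'
  calc 1 + z • u = u * (a * b) := huab.symm
    _ = (u * a) * b := by rw [mul_assoc]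
    _ = a * (v * b) := by rw [hua, mul_assoc]

/-- Resolvent connection: with `L_θ` the (self-adjoint) Laurent operator of the symbol `θ`,
`K` multiplication by the bounded positive sequence `κ`, `S` multiplication by `√κ`,
`Q_κ = √κ L_θ² √κ`, `P_κ = L_θ κ L_θ` and `ψₙ = L_θ δₙ`, one has for `Im z > 0` and `m ∈ ℤ`:
`δ_{0,m} + z ⟨(Q_κ - z)⁻¹δ₀, δₘ⟩ = √(κ₀κₘ) ⟨(P_κ - z)⁻¹ψ₀, ψₘ⟩`. -/
theorem stmt14 (θc : ℤ → ℂ)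
    (Lθ K S : lp (fun _ : ℤ => ℂ) 2 →L[ℂ] lp (fun _ : ℤ => ℂ) 2)
    (hLθ : ∀ n m : ℤ,
      (inner ℂ (lp.single 2 n (1 : ℂ)) (Lθ (lp.single 2 m (1 : ℂ))) : ℂ) = θc (n - m))
    (hLθsa : IsSelfAdjoint Lθ)
    (κ : ℤ → ℝ) (κmin κmax : ℝ) (hκmin : 0 < κmin)
    (hκ : ∀ n, κmin ≤ κ n ∧ κ n ≤ κmax)
    (hK : ∀ (u : lp (fun _ : ℤ => ℂ) 2) (n : ℤ), (K u : ∀ _ : ℤ, ℂ) n = κ n * (u : ∀ _ : ℤ, ℂ) n)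
    (hS : ∀ (u : lp (fun _ : ℤ => ℂ) 2) (n : ℤ),
      (S u : ∀ _ : ℤ, ℂ) n = Real.sqrt (κ n) * (u : ∀ _ : ℤ, ℂ) n)
    (z : ℂ) (hz : 0 < z.im) (m : ℤ) :
    (if m = 0 then (1 : ℂ) else 0)
      + z * (inner ℂ (lp.single 2 m (1 : ℂ))
          ((Ring.inverse (S ∘L Lθ ∘L Lθ ∘L S - z • (1 : lp (fun _ : ℤ => ℂ) 2 →L[ℂ] lp (fun _ : ℤ => ℂ) 2)))
            (lp.single 2 0 (1 : ℂ))) : ℂ)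
    = (Real.sqrt (κ 0 * κ m) : ℂ)
      * (inner ℂ (Lθ (lp.single 2 m (1 : ℂ)))
          ((Ring.inverse (Lθ ∘L K ∘L Lθ - z • (1 : lp (fun _ : ℤ => ℂ) 2 →L[ℂ] lp (fun _ : ℤ => ℂ) 2)))
            (Lθ (lp.single 2 0 (1 : ℂ)))) : ℂ) := by
  classical
  have hκ0 : ∀ n, (0 : ℝ) ≤ κ n := fun n => le_trans hκmin.le (hκ n).1
  -- symmetry of S, K, Lθ
  have hSsym : ∀ u v : lp (fun _ : ℤ => ℂ) 2, (inner ℂ (S u) v : ℂ) = inner ℂ u (S v) := by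
    intro u v
    rw [lp.inner_eq_tsum, lp.inner_eq_tsum]
    refine tsum_congr fun n => ?_
    simp only [RCLike.inner_apply, hS u n, hS v n, map_mul, Complex.conj_ofReal]
    ring
  have hKsym : ∀ u v : lp (fun _ : ℤ => ℂ) 2, (inner ℂ (K u) v : ℂ) = inner ℂ u (K v) := by
    intro u v
    rw [lp.inner_eq_tsum, lp.inner_eq_tsum]
    refine tsum_congr fun n => ?_
    simp only [RCLike.inner_apply, hK u n, hK v n, map_mul, Complex.conj_ofReal]
    ring
  have hLθsym' : ∀ u v : lp (fun _ : ℤ => ℂ) 2, (inner ℂ (Lθ u) v : ℂ) = inner ℂ u (Lθ v) :=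
    fun u v => (isSelfAdjoint_iff_isSymmetric).mp hLθsa u v
  have hSsa : IsSelfAdjoint S := (isSelfAdjoint_iff_isSymmetric).mpr fun u v => hSsym u v
  -- S ∘ S = K
  have hSS : S ∘L S = K := by
    ext u n
    rw [comp_apply, hS, hS, hK, ← mul_assoc, ← Complex.ofReal_mul,
      Real.mul_self_sqrt (hκ0 n)]
  set a : lp (fun _ : ℤ => ℂ) 2 →L[ℂ] lp (fun _ : ℤ => ℂ) 2 := S ∘L Lθ with ha
  set b : lp (fun _ : ℤ => ℂ) 2 →L[ℂ] lp (fun _ : ℤ => ℂ) 2 := Lθ ∘L S with hb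
  have hab : S ∘L Lθ ∘L Lθ ∘L S = a * b := by
    ext x; simp [ha, hb, mul_apply]
  have hba : Lθ ∘L K ∘L Lθ = b * a := by
    ext x; simp [ha, hb, mul_apply, ← hSS]
  have habsa : IsSelfAdjoint (a * b) := by
    show star (a * b) = a * b
    simp only [star_mul, ha, hb, ← mul_def, star_mul, hLθsa.star_eq, hSsa.star_eq]
  have hbasa : IsSelfAdjoint (b * a) := by
    show star (b * a) = b * a
    simp only [star_mul, ha, hb, ← mul_def, star_mul, hLθsa.star_eq, hSsa.star_eq]
  have h1 : IsUnit (a * b - z • (1 : lp (fun _ : ℤ => ℂ) 2 →L[ℂ] lp (fun _ : ℤ => ℂ) 2)) :=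
    stmt14_isUnit _ habsa z hz
  have h2 : IsUnit (b * a - z • (1 : lp (fun _ : ℤ => ℂ) 2 →L[ℂ] lp (fun _ : ℤ => ℂ) 2)) :=
    stmt14_isUnit _ hbasa z hz
  have key := stmt14_ring a b z h1 h2
  rw [hab, hba]
  set u := Ring.inverse (a * b - z • (1 : lp (fun _ : ℤ => ℂ) 2 →L[ℂ] lp (fun _ : ℤ => ℂ) 2))
    with hu
  set v := Ring.inverse (b * a - z • (1 : lp (fun _ : ℤ => ℂ) 2 →L[ℂ] lp (fun _ : ℤ => ℂ) 2))
    with hv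
  set δ0 : lp (fun _ : ℤ => ℂ) 2 := lp.single 2 0 (1 : ℂ) with hδ0
  set δm : lp (fun _ : ℤ => ℂ) 2 := lp.single 2 m (1 : ℂ) with hδm
  -- Kronecker delta as inner ℂ product
  have hδinner : (inner ℂ δm δ0 : ℂ) = if m = 0 then 1 else 0 := by
    rw [hδm, hδ0, lp.inner_single_left]
    rcases eq_or_ne m 0 with h | h
    · subst h; simp [lp.single_apply_self]
    · rw [lp.single_apply_ne _ _ _ h]; simp [h]
  have hLHS : (if m = 0 then (1 : ℂ) else 0) + z * (inner ℂ δm (u δ0) : ℂ)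
      = inner ℂ δm ((a * (v * b)) δ0) := by
    rw [← key, add_apply, one_apply_eq_self, smul_apply, inner_add_right, inner_smul_right, hδinner]
  rw [hLHS]
  -- action of S on basis vectors
  have hSδ : ∀ k : ℤ, S (lp.single 2 k (1 : ℂ)) = (Real.sqrt (κ k) : ℂ) • lp.single 2 k (1 : ℂ) := by
    intro k
    refine lp.ext (funext fun n => ?_)
    rw [hS]
    rcases eq_or_ne n k with h | h
    · subst h; rw [lp.coeFn_smul, Pi.smul_apply]; simp [lp.single_apply_self]
    · rw [lp.coeFn_smul, Pi.smul_apply]; simp [lp.single_apply_ne _ _ _ h, Pi.single_apply, h]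
  have hbδ0 : b δ0 = (Real.sqrt (κ 0) : ℂ) • Lθ δ0 := by
    rw [hb, comp_apply, hδ0, hSδ 0, map_smul]
  have e1 : (a * (v * b)) δ0 = S (Lθ ((v * b) δ0)) := by
    rw [mul_apply_eq_comp, ha, comp_apply]
  rw [e1, ← hSsym, hSδ m, ← hδm, inner_smul_left, Complex.conj_ofReal,
    hLθsym' δm, mul_apply_eq_comp, hbδ0, map_smul, map_smul, inner_smul_right, ← mul_assoc,
    ← Complex.ofReal_mul, ← Real.sqrt_mul (hκ0 m), mul_comm (κ m)]
end
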